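/- If (G, σ) is an LDT graph and 𝒯 = (T, S, σ, τ_T, τ_S) is any μ-free scenario explaining (G, σ), then the gene tree T displays every triple in 𝔗(G); in particular, the triple set 𝔗(G) is compatible. -/
import Mathlib


/-- A rooted tree, modeled by its ancestor partial order `le` (x `le` y means
y is an ancestor of x, i.e., y lies on the path from the root to x), together
with last common ancestors `lca`.  The `chain` condition states that the set
of ancestors of any vertex is totally ordered, as in a rooted tree. -/
structure TreeOrder (V : Type) where
  le : V → V → Prop
  le_refl : ∀ x, le x x
  le_antisymm : ∀ x y, le x y → le y x → x = y
  le_trans : ∀ x y z, le x y → le y z → le x z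
  chain : ∀ x y z, le x y → le x z → le y z ∨ le z y
  lca : V → V → V
  le_lca_left : ∀ x y, le x (lca x y)
  le_lca_right : ∀ x y, le y (lca x y)
  lca_le : ∀ x y z, le x z → le y z → le (lca x y) z

/-- A leaf is a `⪯`-minimal vertex. -/
def TreeOrder.IsLeaf {V : Type} (t : TreeOrder V) (x : V) : Prop :=
  ∀ y, t.le y x → y = x

/-- A time map: strict descendants get strictly smaller times. -/
def TreeOrder.IsTimeMap {V : Type} (t : TreeOrder V) (tau : V → ℝ) : Prop :=
  ∀ x y, t.le x y → x ≠ y → tau x < tau y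

/-- The tree displays the rooted triple `ab|c`. -/
def TreeOrder.displays {V : Type} (t : TreeOrder V) (a b c : V) : Prop :=
  t.le (t.lca a b) (t.lca a c) ∧ t.lca a b ≠ t.lca a c ∧ t.lca a c = t.lca b c

/-- A μ-free scenario: planted trees `T`, `S`, a map `σ` sending leaves of `T`
to leaves of `S`, and time maps `τT`, `τS` with `τT x = τS (σ x)` for leaves. -/
structure MuFreeScenario (VT VS : Type) where
  T : TreeOrder VT
  S : TreeOrder VS
  sigma : VT → VS
  sigma_leaf : ∀ x, T.IsLeaf x → S.IsLeaf (sigma x)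
  tauT : VT → ℝ
  tauS : VS → ℝ
  timeT : T.IsTimeMap tauT
  timeS : S.IsTimeMap tauS
  tau_leaf : ∀ x, T.IsLeaf x → tauT x = tauS (sigma x)

/-- The adjacency of the LDT graph of a μ-free scenario (on the leaves of `T`). -/
def MuFreeScenario.ldtAdj {VT VS : Type} (sc : MuFreeScenario VT VS) (a b : VT) : Prop :=
  a ≠ b ∧ sc.tauT (sc.T.lca a b) < sc.tauS (sc.S.lca (sc.sigma a) (sc.sigma b))

/-- The μ-free scenario `sc` explains the vertex-colored graph `(G, σ)`:
`fL` identifies the vertices of `G` with the leaves of `T`, `fM` identifies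
the colors with leaves of `S` compatibly with the colorings, and the edges
of `G` are exactly the later-divergence-time pairs. -/
def ExplainsLDT {L M VT VS : Type} (sc : MuFreeScenario VT VS)
    (G : SimpleGraph L) (sigma : L → M) (fL : L → VT) (fM : M → VS) : Prop :=
  Function.Injective fL ∧ Function.Injective fM ∧
  (∀ x, sc.T.IsLeaf (fL x)) ∧ (∀ v, sc.T.IsLeaf v → ∃ x, fL x = v) ∧
  (∀ m, sc.S.IsLeaf (fM m)) ∧
  (∀ x, sc.sigma (fL x) = fM (sigma x)) ∧
  (∀ a b, G.Adj a b ↔ sc.ldtAdj (fL a) (fL b))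

/-- `(G, σ)` is an LDT graph: it is explained by some μ-free scenario. -/
def IsLDTGraph {L M : Type} (G : SimpleGraph L) (sigma : L → M) : Prop :=
  ∃ (VT VS : Type) (sc : MuFreeScenario VT VS) (fL : L → VT) (fM : M → VS),
    ExplainsLDT sc G sigma fL fM

/-- The triple set 𝔗(G): all `(x, y, z)` (read as the rooted triple `xy|z`)
with `x, y, z` pairwise distinct, `xy ∈ E` and `xz, yz ∉ E`. -/
def tripleSetT {L : Type} (G : SimpleGraph L) : Set (L × L × L) :=
  {p | p.1 ≠ p.2.1 ∧ p.1 ≠ p.2.2 ∧ p.2.1 ≠ p.2.2 ∧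
    G.Adj p.1 p.2.1 ∧ ¬ G.Adj p.1 p.2.2 ∧ ¬ G.Adj p.2.1 p.2.2}

lemma TreeOrder.lca_comm {V : Type} (t : TreeOrder V) (x y : V) :
    t.lca x y = t.lca y x :=
  t.le_antisymm _ _ (t.lca_le _ _ _ (t.le_lca_right y x) (t.le_lca_left y x))
    (t.lca_le _ _ _ (t.le_lca_right x y) (t.le_lca_left x y))

lemma TreeOrder.lca_cmp {V : Type} (t : TreeOrder V) (a b c : V) :
    t.le (t.lca a b) (t.lca a c) ∨ t.le (t.lca a c) (t.lca a b) :=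
  t.chain a _ _ (t.le_lca_left a b) (t.le_lca_left a c)

lemma TreeOrder.key {V : Type} (t : TreeOrder V) (a b c : V)
    (h : t.le (t.lca a b) (t.lca a c)) (hne : t.lca a b ≠ t.lca a c) :
    t.lca a c = t.lca b c := by
  have h1 : t.le (t.lca b c) (t.lca a c) :=
    t.lca_le _ _ _ (t.le_trans _ _ _ (t.le_lca_right a b) h) (t.le_lca_right a c)
  rcases t.chain b _ _ (t.le_lca_right a b) (t.le_lca_left b c) with h2 | h2
  · exact t.le_antisymm _ _
      (t.lca_le _ _ _ (t.le_trans _ _ _ (t.le_lca_left a b) h2) (t.le_lca_right b c)) h1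
  · exact absurd (t.le_antisymm _ _ h
      (t.lca_le _ _ _ (t.le_lca_left a b)
        (t.le_trans _ _ _ (t.le_lca_right b c) h2))) hne

lemma TreeOrder.tau_mono {V : Type} (t : TreeOrder V) {tau : V → ℝ}
    (ht : t.IsTimeMap tau) {x y : V} (h : t.le x y) : tau x ≤ tau y := by
  by_cases hxy : x = y
  · exact le_of_eq (congrArg tau hxy)
  · exact le_of_lt (ht x y h hxy)

/-- If `(G, σ)` is an LDT graph and `𝒯` is any μ-free scenario
explaining it, then the gene tree `T` displays every triple in 𝔗(G);
in particular 𝔗(G) is compatible. -/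
theorem stmt6 {L M VT VS : Type} (G : SimpleGraph L) (sigma : L → M)
    (sc : MuFreeScenario VT VS) (fL : L → VT) (fM : M → VS)
    (h : ExplainsLDT sc G sigma fL fM) :
    (∀ x y z : L, (x, y, z) ∈ tripleSetT G →
        sc.T.displays (fL x) (fL y) (fL z)) ∧
    (∃ (W : Type) (t : TreeOrder W) (g : L → W), Function.Injective g ∧
        (∀ v, t.IsLeaf (g v)) ∧
        ∀ x y z : L, (x, y, z) ∈ tripleSetT G →
          t.displays (g x) (g y) (g z)) := by
  obtain ⟨hinjL, _, hleafT, _, _, _, hadj⟩ := h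
  have main : ∀ x y z : L, (x, y, z) ∈ tripleSetT G →
      sc.T.displays (fL x) (fL y) (fL z) := by
    intro x y z hp
    obtain ⟨hxy, hxz, hyz, exy, nxz, nyz⟩ := hp
    set a := fL x; set b := fL y; set c := fL z
    set sa := sc.sigma a; set sb := sc.sigma b; set sc' := sc.sigma c
    have txy : sc.tauT (sc.T.lca a b) < sc.tauS (sc.S.lca sa sb) :=
      ((hadj x y).mp exy).2
    have nxz' : sc.tauS (sc.S.lca sa sc') ≤ sc.tauT (sc.T.lca a c) := by
      have := fun hb => nxz ((hadj x z).mpr ⟨fun he => hxz (hinjL he), hb⟩)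
      exact le_of_not_gt this
    have nyz' : sc.tauS (sc.S.lca sb sc') ≤ sc.tauT (sc.T.lca b c) := by
      have := fun hb => nyz ((hadj y z).mpr ⟨fun he => hyz (hinjL he), hb⟩)
      exact le_of_not_gt this
    -- main step: lca a c is not below lca a b
    have hnc : ¬ sc.T.le (sc.T.lca a c) (sc.T.lca a b) := by
      intro hle
      have t1 : sc.tauT (sc.T.lca a c) ≤ sc.tauT (sc.T.lca a b) :=
        sc.T.tau_mono sc.timeT hle
      have hbc : sc.T.le (sc.T.lca b c) (sc.T.lca a b) :=
        sc.T.lca_le _ _ _ (sc.T.le_lca_right a b)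
          (sc.T.le_trans _ _ _ (sc.T.le_lca_right a c) hle)
      have t2 : sc.tauT (sc.T.lca b c) ≤ sc.tauT (sc.T.lca a b) :=
        sc.T.tau_mono sc.timeT hbc
      have tSxz : sc.tauS (sc.S.lca sa sc') < sc.tauS (sc.S.lca sa sb) :=
        lt_of_le_of_lt (le_trans nxz' t1) txy
      have hSle : sc.S.le (sc.S.lca sa sc') (sc.S.lca sa sb) := by
        rcases sc.S.lca_cmp sa sb sc' with h2 | h2
        · exact absurd (sc.S.tau_mono sc.timeS h2) (not_le_of_gt tSxz)
        · exact h2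
      have hSne : sc.S.lca sa sc' ≠ sc.S.lca sa sb := by
        intro he; rw [he] at tSxz; exact lt_irrefl _ tSxz
      have heq : sc.S.lca sa sb = sc.S.lca sc' sb := sc.S.key sa sc' sb hSle hSne
      have : sc.tauS (sc.S.lca sa sb) < sc.tauS (sc.S.lca sa sb) := by
        calc sc.tauS (sc.S.lca sa sb) = sc.tauS (sc.S.lca sb sc') := by
              rw [heq, sc.S.lca_comm]
          _ ≤ sc.tauT (sc.T.lca b c) := nyz'
          _ ≤ sc.tauT (sc.T.lca a b) := t2
          _ < sc.tauS (sc.S.lca sa sb) := txy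
      exact lt_irrefl _ this
    have hle : sc.T.le (sc.T.lca a b) (sc.T.lca a c) :=
      (sc.T.lca_cmp a b c).resolve_right hnc
    have hne : sc.T.lca a b ≠ sc.T.lca a c := by
      intro he; rw [← he] at hnc; exact hnc (sc.T.le_refl _)
    exact ⟨hle, hne, sc.T.key a b c hle hne⟩
  exact ⟨main, VT, sc.T, fL, hinjL, hleafT, main⟩
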